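/- arXiv:1309.6070 — 4 statements merged into one kernel-verified Lean document; each statement's English description precedes it below -/
import Mathlib

section
/- Let u be an oriented word of rank k ≥ 2 and ≤_u the left order on F_k with positive cone P_u = {g : τ_u(g) > 0}. For distinct indices i, j: a_i <_u a_j if and only if a_i occurs to the left of a_j in u, and a_i^{-1} <_u a_j^{-1} if and only if a_i^{-1} occurs to the left of a_j^{-1} in u. -/
open FreeGroup

/-- A letter over the alphabet `{a_1,...,a_k, a_1⁻¹,...,a_k⁻¹}`:
`(i, true)` is the positive letter `a_i`, `(i, false)` is `a_i⁻¹`. -/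
abbrev Letter (k : ℕ) := Fin k × Bool

/-- Formal inverse of a letter. -/
def invL {k : ℕ} (x : Letter k) : Letter k := (x.1, !x.2)

/-- An oriented word of rank `k`: each of the `2k` letters appears exactly once. -/
def IsOriented {k : ℕ} (u : List (Letter k)) : Prop :=
  u.Nodup ∧ ∀ x : Letter k, x ∈ u

/-- `x` occurs to the left of `y` in `u`. -/
def leftOf {k : ℕ} (u : List (Letter k)) (x y : Letter k) : Prop :=
  u.idxOf x < u.idxOf y

instance {k : ℕ} (u : List (Letter k)) (x y : Letter k) : Decidable (leftOf u x y) :=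
  inferInstanceAs (Decidable (_ < _))

/-- Number of occurrences of the two-letter word `xy` as a contiguous subword of `L`. -/
def cnt {k : ℕ} (L : List (Letter k)) (x y : Letter k) : ℕ :=
  (L.zip L.tail).count (x, y)

/-- The case transition weight `α_u`, on a reduced word `L`. -/
noncomputable def alphaW {k : ℕ} (u L : List (Letter k)) : ℝ :=
  (∑ a : Fin k, ∑ b : Fin k,
      if leftOf u (a, false) (b, false) then (cnt L (a, true) (b, false) : ℝ) else 0)
  - ∑ a : Fin k, ∑ b : Fin k,
      if leftOf u (a, true) (b, true) then (cnt L (b, false) (a, true) : ℝ) else 0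

/-- The letter transition weight `β_u`, on a reduced word `L`. -/
noncomputable def betaW {k : ℕ} (u L : List (Letter k)) : ℝ :=
  (∑ a : Fin k, ∑ b : Fin k,
      if leftOf u (a, false) (b, true) then (cnt L (a, true) (b, true) : ℝ) else 0)
  - ∑ a : Fin k, ∑ b : Fin k,
      if leftOf u (a, false) (b, true) then (cnt L (b, false) (a, false) : ℝ) else 0

/-- The last letter weight `ω`, on a reduced word `L`. -/
noncomputable def omegaW {k : ℕ} (L : List (Letter k)) : ℝ :=
  match L.getLast? with
  | none => 0
  | some x => if x.2 then 1 / 2 else -(1 / 2)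

/-- The weight `τ_u` induced by an oriented word `u`, evaluated on the reduced form. -/
noncomputable def tau {k : ℕ} (u : List (Letter k)) (g : FreeGroup (Fin k)) : ℝ :=
  alphaW u g.toWord + betaW u g.toWord + omegaW g.toWord

/-- The weight contribution `wtc_u` of a reduced two-letter word `xy`. -/
noncomputable def wtc {k : ℕ} (u : List (Letter k)) (x y : Letter k) : ℝ :=
  if x.2 then (if leftOf u (x.1, false) y then 1 else 0)
  else (if leftOf u y (x.1, true) then -1 else 0)

/-- The inverse word of `u`. -/
def invWord {k : ℕ} (u : List (Letter k)) : List (Letter k) := (u.map invL).reverse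

/-- A function `τ : G → ℝ` with small relative defect. -/
def SmallRelDefect {G : Type*} [Group G] (τ : G → ℝ) : Prop :=
  τ 1 = 0 ∧ ∀ g h : G, (g ≠ 1 ∨ h ≠ 1) → |τ g + τ h - τ (g * h)| < |τ g| + |τ h|

/-!
The reduced forms of `a_i⁻¹ a_j` and `a_i a_j⁻¹` are two-letter words, so `τ_u` on them is the
weight contribution `wtc_u` of that single transition plus `ω = ±1/2`. The transition weight is
`-1` or `0` (resp. `1` or `0`) according to the relative position of the two letters in `u`, and
since every letter occurs in `u`, for distinct letters "not to the right" means "to the left".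
-/

section TwoLetterWords

variable {k : ℕ}

theorem cnt_pair (x y p q : Letter k) :
    cnt [x, y] p q = if x = p ∧ y = q then 1 else 0 := by
  by_cases hx : x = p <;> by_cases hy : y = q <;> simp [cnt, hx, hy]

theorem sum_sum_ite_cnt_pair (c : Fin k → Fin k → Prop) [∀ a b, Decidable (c a b)]
    (x y : Letter k) (s t : Bool) :
    (∑ a : Fin k, ∑ b : Fin k, if c a b then (cnt [x, y] (a, s) (b, t) : ℝ) else 0)
      = if x.2 = s ∧ y.2 = t ∧ c x.1 y.1 then 1 else 0 := by
  simp only [cnt_pair, Prod.ext_iff]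
  rw [Finset.sum_eq_single x.1 (by intro a _ ha; simp [Ne.symm ha]) (by simp),
    Finset.sum_eq_single y.1 (by intro b _ hb; simp [Ne.symm hb]) (by simp)]
  by_cases hs : x.2 = s <;> by_cases ht : y.2 = t <;> simp [hs, ht]

theorem sum_sum_ite_cnt_pair_swap (c : Fin k → Fin k → Prop) [∀ a b, Decidable (c a b)]
    (x y : Letter k) (s t : Bool) :
    (∑ a : Fin k, ∑ b : Fin k, if c a b then (cnt [x, y] (b, s) (a, t) : ℝ) else 0)
      = if x.2 = s ∧ y.2 = t ∧ c y.1 x.1 then 1 else 0 := by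
  rw [Finset.sum_comm]
  exact sum_sum_ite_cnt_pair (fun b a => c a b) x y s t

/-- Exactly one of the four sums in `α_u + β_u` can count a given two-letter word. -/
theorem alphaW_add_betaW_pair (u : List (Letter k)) (x y : Letter k) :
    alphaW u [x, y] + betaW u [x, y] = wtc u x y := by
  obtain ⟨a, s⟩ := x
  obtain ⟨b, t⟩ := y
  simp only [alphaW, betaW, wtc, sum_sum_ite_cnt_pair, sum_sum_ite_cnt_pair_swap]
  cases s <;> cases t <;> simp [neg_ite]

theorem tau_eq_wtc_of_toWord_eq_pair (u : List (Letter k)) {g : FreeGroup (Fin k)}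
    {x y : Letter k} (hg : g.toWord = [x, y]) :
    tau u g = wtc u x y + if y.2 then 1 / 2 else -(1 / 2) := by
  rw [tau, hg, alphaW_add_betaW_pair]
  simp [omegaW]

theorem toWord_mk_pair {x y : Letter k} (hxy : x.1 ≠ y.1) :
    (FreeGroup.mk [x, y]).toWord = [x, y] := by
  rw [toWord_mk]
  exact IsReduced.reduce_eq (by simp [FreeGroup.IsReduced, hxy])

end TwoLetterWords

theorem leftOf_iff_not_leftOf {k : ℕ} {u : List (Letter k)} {x y : Letter k} (hx : x ∈ u)
    (hxy : x ≠ y) : leftOf u x y ↔ ¬ leftOf u y x := by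
  have hne : u.idxOf x ≠ u.idxOf y := fun h => hxy ((List.idxOf_inj hx).1 h)
  unfold leftOf
  omega

theorem stmt10_general {k : ℕ} (u : List (Letter k)) (hu : IsOriented u)
    (i j : Fin k) (hij : i ≠ j) :
    (0 < tau u ((FreeGroup.of i)⁻¹ * FreeGroup.of j) ↔ leftOf u (i, true) (j, true))
    ∧ (0 < tau u (FreeGroup.of i * (FreeGroup.of j)⁻¹) ↔ leftOf u (i, false) (j, false)) := by
  have hinv_mul : (of i)⁻¹ * of j = FreeGroup.mk [(i, false), (j, true)] := rfl
  have hmul_inv : of i * (of j)⁻¹ = FreeGroup.mk [(i, true), (j, false)] := rfl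
  rw [hinv_mul, hmul_inv, tau_eq_wtc_of_toWord_eq_pair u (toWord_mk_pair hij),
    tau_eq_wtc_of_toWord_eq_pair u (toWord_mk_pair hij),
    leftOf_iff_not_leftOf (hu.2 (i, true)) (by simp [hij])]
  simp only [wtc, Bool.false_eq_true, if_true, if_false]
  constructor <;> split_ifs with h <;> norm_num [h]

theorem stmt10 {k : ℕ} (hk : 2 ≤ k) (u : List (Letter k)) (hu : IsOriented u)
    (i j : Fin k) (hij : i ≠ j) :
    (0 < tau u ((FreeGroup.of i)⁻¹ * FreeGroup.of j) ↔ leftOf u (i, true) (j, true))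
    ∧ (0 < tau u (FreeGroup.of i * (FreeGroup.of j)⁻¹) ↔ leftOf u (i, false) (j, false)) :=
  stmt10_general u hu i j hij
end

section
/- For every oriented word u of rank k ≥ 2 and every reduced word g of rank k, τ_u(g) + τ_{u^{-1}}(g^s) = 0, where g^s denotes the case switch of g (each letter replaced by its inverse) and u^{-1} is the inverse word of u. -/
open FreeGroup

/-!
Reversing `u` and switching the case of its letters reverses every comparison: `x` lies left
of `y` in `u⁻¹` iff `y⁻¹` lies left of `x⁻¹` in `u`. The case switch of `g` is again reduced
and turns each two-letter subword `xy` into `x⁻¹y⁻¹`. Hence every term counted positively in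
`α_u(g)` or `β_u(g)` is counted negatively in `α_{u⁻¹}(gˢ)` or `β_{u⁻¹}(gˢ)` and vice versa,
while `ω` changes sign because the last letter switches case.
-/

section CaseSwitch

variable {k : ℕ}

@[simp]
lemma invL_invL (x : Letter k) : invL (invL x) = x := by
  simp [invL]

lemma invL_injective : Function.Injective (invL (k := k)) :=
  Function.LeftInverse.injective invL_invL

lemma idxOf_invWord {u : List (Letter k)} (hu : u.Nodup) {x : Letter k} (hx : invL x ∈ u) :
    (invWord u).idxOf x = u.length - 1 - u.idxOf (invL x) := by
  have hi := List.idxOf_lt_length_of_mem hx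
  have hlen : u.length - 1 - u.idxOf (invL x) < (invWord u).length := by
    simp only [invWord, List.length_reverse, List.length_map]; omega
  have hget : (invWord u)[u.length - 1 - u.idxOf (invL x)] = x := by
    simp only [invWord, List.getElem_reverse, List.getElem_map, List.length_map,
      Nat.sub_sub_self (show u.idxOf (invL x) ≤ u.length - 1 by omega), List.getElem_idxOf hi,
      invL_invL]
  conv_lhs => rw [← hget]
  exact List.nodup_reverse.mpr (hu.map invL_injective) |>.idxOf_getElem _ hlen

lemma leftOf_invWord {u : List (Letter k)} (hu : IsOriented u) (x y : Letter k) :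
    leftOf (invWord u) x y ↔ leftOf u (invL y) (invL x) := by
  have hx := List.idxOf_lt_length_of_mem (hu.2 (invL x))
  have hy := List.idxOf_lt_length_of_mem (hu.2 (invL y))
  rw [leftOf, leftOf, idxOf_invWord hu.1 (hu.2 _), idxOf_invWord hu.1 (hu.2 _)]
  omega

lemma cnt_map_invL (L : List (Letter k)) (x y : Letter k) :
    cnt (L.map invL) x y = cnt L (invL x) (invL y) := by
  have hinj : Function.Injective (Prod.map (invL (k := k)) (invL (k := k))) :=
    invL_injective.prodMap invL_injective
  have hzip : (L.map invL).zip (L.map invL).tail = (L.zip L.tail).map (Prod.map invL invL) := by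
    rw [← List.map_tail, List.zip_map]
  have hxy : (x, y) = Prod.map invL invL (invL x, invL y) := by simp
  rw [cnt, cnt, hzip, hxy, List.count_map_of_injective _ _ hinj]

lemma alphaW_invWord_map_invL {u : List (Letter k)} (hu : IsOriented u) (L : List (Letter k)) :
    alphaW (invWord u) (L.map invL) = -alphaW u L := by
  simp only [alphaW, leftOf_invWord hu, cnt_map_invL, invL, Bool.not_true, Bool.not_false]
  rw [neg_sub]
  congr 1 <;> exact Finset.sum_comm

lemma betaW_invWord_map_invL {u : List (Letter k)} (hu : IsOriented u) (L : List (Letter k)) :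
    betaW (invWord u) (L.map invL) = -betaW u L := by
  simp only [betaW, leftOf_invWord hu, cnt_map_invL, invL, Bool.not_true, Bool.not_false]
  rw [neg_sub]
  congr 1 <;> exact Finset.sum_comm

lemma omegaW_map_invL (L : List (Letter k)) : omegaW (L.map invL) = -omegaW L := by
  rw [omegaW, omegaW, List.getLast?_map]
  rcases L.getLast? with _ | ⟨i, _ | _⟩ <;> simp [invL]

lemma isReduced_map_invL {L : List (Letter k)} (hL : FreeGroup.IsReduced L) :
    FreeGroup.IsReduced (L.map invL) := by
  rw [FreeGroup.IsReduced, List.isChain_map]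
  exact hL.imp fun x y h h1 => by simpa [invL] using h h1

end CaseSwitch

theorem stmt12_general {k : ℕ} (u : List (Letter k)) (hu : IsOriented u)
    (g : FreeGroup (Fin k)) :
    tau u g + tau (invWord u) (FreeGroup.mk (g.toWord.map invL)) = 0 := by
  have hswitch : (FreeGroup.mk (g.toWord.map invL)).toWord = g.toWord.map invL := by
    rw [toWord_mk, (isReduced_map_invL isReduced_toWord).reduce_eq]
  rw [tau, tau, hswitch, alphaW_invWord_map_invL hu, betaW_invWord_map_invL hu,
    omegaW_map_invL]
  ring

theorem stmt12 {k : ℕ} (hk : 2 ≤ k) (u : List (Letter k)) (hu : IsOriented u)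
    (g : FreeGroup (Fin k)) :
    tau u g + tau (invWord u) (FreeGroup.mk (g.toWord.map invL)) = 0 :=
  stmt12_general u hu g
end

section
/- For every oriented word u of rank k ≥ 2, the left order ≤_u on F_k induced by u is not right-invariant; equivalently, the positive cone P_u = {g : τ_u(g) > 0} is not invariant under conjugation in F_k. -/
open FreeGroup

/-!
On a reduced word, `τ_u` is the sum of the contributions `wtc` of its two-letter subwords plus
`±1/2` for the last letter, so it can be evaluated by hand on short words. Write `A = a⁻¹`,
`B = b⁻¹` for two generators `a, b` with `a` before `b` in `u`. If `A` is also before `B`, the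
word `aB` has weight `1/2` and its cyclic conjugate `Ba` weight `-1/2`. Otherwise `B` is before
`A`; if `b` or `B` lies between `a` and `A`, conjugating `a` (weight `1/2`) by that letter gives
weight `-1/2`. In the remaining case `B` comes first and `b` last among the four letters, and
the commutator `abAB` (weight `1/2`) has the cyclic conjugate `bABa` of weight `-1/2`.
-/

theorem sum_sum_ite_ite_eq {α β M : Type*} [Fintype α] [Fintype β] [DecidableEq α]
    [DecidableEq β] [AddCommMonoid M] (P : α → β → Prop) [∀ x y, Decidable (P x y)]
    (a : α) (b : β) (m : M) :
    (∑ x, ∑ y, if P x y then (if a = x then if b = y then m else 0 else 0) else 0)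
      = if P a b then m else 0 := by
  have h : ∀ x y, (if P x y then (if a = x then if b = y then m else 0 else 0) else 0)
      = if a = x then (if b = y then (if P x y then m else 0) else 0) else 0 := by
    intros; split_ifs <;> simp_all
  simp [h]

theorem sum_sum_ite_ite_eq' {α β M : Type*} [Fintype α] [Fintype β] [DecidableEq α]
    [DecidableEq β] [AddCommMonoid M] (P : α → β → Prop) [∀ x y, Decidable (P x y)]
    (a : β) (b : α) (m : M) :
    (∑ x, ∑ y, if P x y then (if a = y then if b = x then m else 0 else 0) else 0)
      = if P b a then m else 0 := by
  rw [Finset.sum_comm]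
  exact sum_sum_ite_ite_eq (fun y x => P x y) a b m

theorem alphaW_add_betaW {k : ℕ} (u L : List (Letter k)) :
    alphaW u L + betaW u L = ((L.zip L.tail).map fun p => wtc u p.1 p.2).sum := by
  unfold alphaW betaW cnt
  induction L.zip L.tail with
  | nil => simp
  | cons q Z ih =>
    obtain ⟨⟨a, s⟩, b, t⟩ := q
    simp only [List.count_cons, List.map_cons, List.sum_cons, beq_iff_eq, Prod.mk.injEq]
    push_cast
    simp only [ite_add_zero, Finset.sum_add_distrib]
    cases s <;> cases t <;>
      simp [wtc, ite_and, sum_sum_ite_ite_eq, sum_sum_ite_ite_eq'] at ih ⊢ <;>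
      split_ifs <;> linarith

theorem tau_mk {k : ℕ} (u : List (Letter k)) {L : List (Letter k)} (hL : IsReduced L) :
    tau u (mk L) = ((L.zip L.tail).map fun p => wtc u p.1 p.2).sum + omegaW L := by
  rw [tau, toWord_mk, hL.reduce_eq, alphaW_add_betaW]

theorem mk_append_singleton_eq_conj {α : Type*} (L : List (α × Bool)) (y : α × Bool) :
    mk (L ++ [y]) = (mk [y])⁻¹ * mk (y :: L) * (mk [y])⁻¹⁻¹ := by
  rw [inv_inv, ← mul_mk, ← List.singleton_append (l := L), ← mul_mk, inv_mul_cancel_left]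

section leftOf

variable {k : ℕ} {u : List (Letter k)}

theorem leftOf_asymm {x y : Letter k} (h : leftOf u x y) : ¬ leftOf u y x :=
  Nat.lt_asymm h

theorem leftOf_or_leftOf (hu : IsOriented u) {x y : Letter k} (hxy : x ≠ y) :
    leftOf u x y ∨ leftOf u y x :=
  Nat.lt_or_gt_of_ne fun h => hxy ((List.idxOf_inj (hu.2 x)).mp h)

end leftOf

section witnesses

variable {k : ℕ} {u : List (Letter k)} {i j : Fin k}

theorem exists_leftOf_of_two_le (hk : 2 ≤ k) (hu : IsOriented u) :
    ∃ i j : Fin k, i ≠ j ∧ leftOf u (i, true) (j, true) := by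
  obtain ⟨i, j, hij⟩ := (Fin.nontrivial_iff_two_le.mpr hk).exists_pair_ne
  rcases leftOf_or_leftOf hu (x := (i, true)) (y := (j, true)) (by simp [hij]) with h | h
  · exact ⟨i, j, hij, h⟩
  · exact ⟨j, i, hij.symm, h⟩

theorem exists_conj_of_between (hij : i ≠ j) {s : Bool} (h₁ : leftOf u (i, true) (j, s))
    (h₂ : leftOf u (j, s) (i, false)) :
    ∃ g h : FreeGroup (Fin k), 0 < tau u g ∧ tau u (h * g * h⁻¹) < 0 := by
  refine ⟨mk [(i, true)], mk [(j, !s)], by norm_num [tau_mk, omegaW], ?_⟩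
  rw [inv_mk, mul_mk, mul_mk, tau_mk u (by cases s <;> simp [invRev, hij, hij.symm])]
  cases s <;> norm_num [invRev, wtc, omegaW, h₁, h₂, leftOf_asymm h₁, leftOf_asymm h₂]

theorem exists_conj_of_leftOf_of_leftOf (hij : i ≠ j) (hab : leftOf u (i, true) (j, true))
    (hAB : leftOf u (i, false) (j, false)) :
    ∃ g h : FreeGroup (Fin k), 0 < tau u g ∧ tau u (h * g * h⁻¹) < 0 := by
  refine ⟨mk [(i, true), (j, false)], (mk [(i, true)])⁻¹, ?_, ?_⟩
  · rw [tau_mk u (by simp [hij])]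
    norm_num [wtc, omegaW, hAB]
  · rw [← mk_append_singleton_eq_conj [(j, false)], tau_mk u (by simp [hij.symm])]
    norm_num [wtc, omegaW, hab]

theorem exists_conj_commutator (hij : i ≠ j) (hab : leftOf u (i, true) (j, true))
    (hBA : leftOf u (j, false) (i, false)) (hAb : leftOf u (i, false) (j, true))
    (hBa : leftOf u (j, false) (i, true)) :
    ∃ g h : FreeGroup (Fin k), 0 < tau u g ∧ tau u (h * g * h⁻¹) < 0 := by
  refine ⟨mk [(i, true), (j, true), (i, false), (j, false)], (mk [(i, true)])⁻¹, ?_, ?_⟩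
  · rw [tau_mk u (by simp [hij, hij.symm])]
    norm_num [wtc, omegaW, hab, hBA, hAb, hBa]
  · rw [← mk_append_singleton_eq_conj [(j, true), (i, false), (j, false)],
      tau_mk u (by simp [hij, hij.symm])]
    norm_num [wtc, omegaW, hab, hBA, hAb, hBa]

end witnesses

theorem stmt15 {k : ℕ} (hk : 2 ≤ k) (u : List (Letter k)) (hu : IsOriented u) :
    ¬ ∀ g h : FreeGroup (Fin k), 0 < tau u g → 0 < tau u (h * g * h⁻¹) := by
  intro H
  suffices ∃ g h : FreeGroup (Fin k), 0 < tau u g ∧ tau u (h * g * h⁻¹) < 0 by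
    obtain ⟨g, h, hg, hconj⟩ := this
    exact lt_asymm (H g h hg) hconj
  obtain ⟨i, j, hij, hab⟩ := exists_leftOf_of_two_le hk hu
  have letters_ne : ∀ s t : Bool, ((i, s) : Letter k) ≠ (j, t) := by simp [hij]
  rcases leftOf_or_leftOf hu (letters_ne false false) with hAB | hBA
  · exact exists_conj_of_leftOf_of_leftOf hij hab hAB
  rcases leftOf_or_leftOf hu (letters_ne false true).symm with hbA | hAb
  · exact exists_conj_of_between hij hab hbA
  rcases leftOf_or_leftOf hu (letters_ne true false) with haB | hBa
  · exact exists_conj_of_between hij haB hBA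
  exact exists_conj_commutator hij hab hBA hAb hBa
end

section
/- For any two oriented words u and u' of rank k ≥ 2, the difference of the weight functions is a sum of Brooks quasi-characters: τ_u − τ_{u'} = Σ φ_{x^{-1}y}, where the sum is over all (unordered) pairs of distinct letters x, y ∈ A ∪ A^{-1} such that x occurs left of y in u and y occurs left of x in u'. -/
open FreeGroup

/-! On two-letter words `φ_{x⁻¹y}` counts `x⁻¹y` minus its inverse `y⁻¹x`. The last-letter
term `ω` cancels in `τ_u - τ_{u'}`, and every count in `α_u + β_u` is charged to an ordered pair
`x..y` of `u` with a coefficient `pairWeight x y` that does not depend on `u`. Pairs ordered alike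
by `u` and `u'` cancel; a pair `x..y` in `u` with `y..x` in `u'` leaves
`pairWeight x y - pairWeight y x`, which is exactly the count of `φ_{x⁻¹y}`. -/

open Finset Function

theorem ite_lt_sub_ite_lt {α β R : Type*} [LinearOrder β] [AddCommGroup R]
    {a b : α → β} (ha : Injective a) (hb : Injective b) (f : α → α → R) (x y : α) :
    ((if a x < a y then f x y else 0) - if b x < b y then f x y else 0)
      = (if a x < a y ∧ b y < b x then f x y else 0)
        - if a y < a x ∧ b x < b y then f x y else 0 := by
  rcases eq_or_ne x y with rfl | hxy
  · simp
  rcases (ha.ne hxy).lt_or_gt with hxa | hxa <;>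
    rcases (hb.ne hxy).lt_or_gt with hxb | hxb <;>
    simp [hxa, hxb, hxa.not_gt, hxb.not_gt]

theorem sum_ite_lt_sub_sum_ite_lt {α β R : Type*} [Fintype α] [LinearOrder β] [AddCommGroup R]
    {a b : α → β} (ha : Injective a) (hb : Injective b) (f : α → α → R) :
    ((∑ x, ∑ y, if a x < a y then f x y else 0) - ∑ x, ∑ y, if b x < b y then f x y else 0)
      = ∑ x, ∑ y, if a x < a y ∧ b y < b x then f x y - f y x else 0 := by
  have hswap : (∑ x, ∑ y, if a y < a x ∧ b x < b y then f x y else 0)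
      = ∑ x, ∑ y, if a x < a y ∧ b y < b x then f y x else 0 := sum_comm
  simp only [← sum_sub_distrib, ite_lt_sub_ite_lt ha hb f]
  simp only [sum_sub_distrib, hswap]
  simp only [← sum_sub_distrib, ite_sub_ite, sub_zero]

theorem List.injective_idxOf_of_forall_mem {α : Type*} [BEq α] [LawfulBEq α] {l : List α}
    (hl : ∀ x, x ∈ l) : Injective (l.idxOf ·) :=
  fun x _ h ↦ (List.idxOf_inj (hl x)).mp h

noncomputable def pairWeight {k : ℕ} (L : List (Letter k)) (x y : Letter k) : ℝ :=
  if x.2 then (if y.2 then -(cnt L (invL y) x : ℝ) else 0)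
  else (if y.2 then (cnt L (invL x) y : ℝ) - cnt L (invL y) x else cnt L (invL x) y)

theorem pairWeight_sub_pairWeight {k : ℕ} (L : List (Letter k)) (x y : Letter k) :
    pairWeight L x y - pairWeight L y x = (cnt L (invL x) y : ℝ) - cnt L (invL y) x := by
  obtain ⟨a, s⟩ := x
  obtain ⟨b, t⟩ := y
  cases s <;> cases t <;> simp [pairWeight, invL, neg_add_eq_sub]

theorem alphaW_add_betaW_s17 {k : ℕ} (u L : List (Letter k)) :
    alphaW u L + betaW u L
      = ∑ x : Letter k, ∑ y : Letter k, if leftOf u x y then pairWeight L x y else 0 := by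
  simp only [alphaW, betaW, pairWeight, invL, Fintype.sum_prod_type, Fintype.sum_bool,
    if_true, Bool.not_true, Bool.not_false, ← sum_add_distrib, ← sum_sub_distrib]
  refine sum_congr rfl fun a _ ↦ sum_congr rfl fun b _ ↦ ?_
  split_ifs <;> first | contradiction | ring

theorem stmt17_general {k : ℕ} (u u' : List (Letter k))
    (hu : IsOriented u) (hu' : IsOriented u') (g : FreeGroup (Fin k)) :
    tau u g - tau u' g
      = ∑ x : Letter k, ∑ y : Letter k,
          if leftOf u x y ∧ leftOf u' y x
          then (cnt g.toWord (invL x) y : ℝ) - cnt g.toWord (invL y) x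
          else 0 := by
  have hdiff : tau u g - tau u' g
      = (∑ x : Letter k, ∑ y : Letter k, if leftOf u x y then pairWeight g.toWord x y else 0)
        - ∑ x : Letter k, ∑ y : Letter k,
            if leftOf u' x y then pairWeight g.toWord x y else 0 := by
    rw [← alphaW_add_betaW_s17, ← alphaW_add_betaW_s17, tau, tau]
    ring
  rw [hdiff]
  refine (sum_ite_lt_sub_sum_ite_lt (List.injective_idxOf_of_forall_mem hu.2)
    (List.injective_idxOf_of_forall_mem hu'.2) (pairWeight g.toWord)).trans ?_
  simp only [pairWeight_sub_pairWeight]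
  rfl

theorem stmt17 {k : ℕ} (hk : 2 ≤ k) (u u' : List (Letter k))
    (hu : IsOriented u) (hu' : IsOriented u') (g : FreeGroup (Fin k)) :
    tau u g - tau u' g
      = ∑ x : Letter k, ∑ y : Letter k,
          if leftOf u x y ∧ leftOf u' y x
          then (cnt g.toWord (invL x) y : ℝ) - cnt g.toWord (invL y) x
          else 0 :=
  stmt17_general u u' hu hu' g
end
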